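/- arXiv:2507.22559 — 2 statements merged into one kernel-verified Lean document; each statement's English description precedes it below -/
import Mathlib

section
/- Let T be Hermitian involutory with {T,H}=0 and T|v₀⟩ = c|v₀⟩, c ∈ {±1}. Let K be a Hermitian operator with [K,H]=0 and {K,T}=0. Then for all real tₐ, t_b, with h = (t_b - tₐ)/2, ⟨v(tₐ)|K|v(t_b)⟩ = i·c·⟨v(h)|(iKT)|v(h)⟩, and this quantity is purely imaginary. Moreover iKT is Hermitian. -/
/-!
Write `U t = exp (-i t H)` and `⟪M⟫ = ⟨v₀|M|v₀⟩`. Then `⟨v(tₐ)|K|v(t_b)⟩ = ⟪K U s⟫` with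
`s = t_b - tₐ`, because `U` is a unitary one-parameter group commuting with `K`. Conjugation by
the involution `T` reverses time, `T U s T = U (-s)`, and `T` acts on `v₀` (from either side) as
the scalar `c`; together with `{K, T} = 0` this gives `c ⟪K U s⟫ = -c ⟪K U (-s)⟫`, i.e.
`⟪K U s⟫` is odd in `s`. Oddness turns the right-hand side, which equals `-c² ⟪K U (-s)⟫`, into the
left-hand side, and since `⟪K U s⟫* = ⟪K U (-s)⟫` it also makes the quantity purely imaginary.
-/

open Matrix

namespace Matrix

variable {n : Type*} [Fintype n]

theorem star_mulVec_dotProduct_mulVec {α : Type*} [CommSemiring α] [StarRing α]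
    (A B : Matrix n n α) (x y : n → α) :
    star (A *ᵥ x) ⬝ᵥ B *ᵥ y = star x ⬝ᵥ (Aᴴ * B) *ᵥ y := by
  rw [star_mulVec, dotProduct_mulVec, dotProduct_mulVec, vecMul_vecMul]

theorem star_star_dotProduct_mulVec {α : Type*} [CommSemiring α] [StarRing α]
    (M : Matrix n n α) (x y : n → α) :
    star (star x ⬝ᵥ M *ᵥ y) = star y ⬝ᵥ Mᴴ *ᵥ x := by
  rw [star_dotProduct, star_star, star_mulVec, ← dotProduct_mulVec]

section Eigenvector

variable {T : Matrix n n ℂ} {v : n → ℂ} {c : ℝ}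

theorem dotProduct_mul_mulVec_of_mulVec_eq (hv : T *ᵥ v = (c : ℂ) • v) (M : Matrix n n ℂ) :
    star v ⬝ᵥ (M * T) *ᵥ v = c * (star v ⬝ᵥ M *ᵥ v) := by
  rw [← mulVec_mulVec, hv, mulVec_smul, dotProduct_smul, smul_eq_mul]

theorem IsHermitian.dotProduct_mul_mulVec_of_mulVec_eq (hT : T.IsHermitian)
    (hv : T *ᵥ v = (c : ℂ) • v) (M : Matrix n n ℂ) :
    star v ⬝ᵥ (T * M) *ᵥ v = c * (star v ⬝ᵥ M *ᵥ v) := by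
  have hvT : star v ᵥ* T = (c : ℂ) • star v := by
    rw [← hT.eq, ← star_mulVec, hv, star_smul, Complex.star_def, Complex.conj_ofReal]
  rw [← mulVec_mulVec, dotProduct_mulVec, hvT, smul_dotProduct, smul_eq_mul]

end Eigenvector

theorem IsHermitian.isHermitian_I_smul_mul {K T : Matrix n n ℂ} (hK : K.IsHermitian)
    (hT : T.IsHermitian) (hKT : K * T = -(T * K)) : (Complex.I • (K * T)).IsHermitian := by
  rw [IsHermitian, conjTranspose_smul, conjTranspose_mul, hT.eq, hK.eq, ← neg_neg (T * K), ← hKT,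
    Complex.star_def, Complex.conj_I, smul_neg, neg_smul, neg_neg]

variable [DecidableEq n]

noncomputable def evolution (H : Matrix n n ℂ) (t : ℝ) : Matrix n n ℂ :=
  NormedSpace.exp ((-(Complex.I * (t : ℂ))) • H)

theorem evolution_mul_evolution (H : Matrix n n ℂ) (a b : ℝ) :
    evolution H a * evolution H b = evolution H (a + b) := by
  rw [evolution, evolution, evolution, ← exp_add_of_commute _ _
    (((Commute.refl H).smul_left _).smul_right _), ← add_smul]
  congr 2
  push_cast
  ring

theorem IsHermitian.conjTranspose_evolution {H : Matrix n n ℂ} (hH : H.IsHermitian) (t : ℝ) :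
    (evolution H t)ᴴ = evolution H (-t) := by
  rw [evolution, evolution, ← exp_conjTranspose, conjTranspose_smul, hH.eq]
  congr 1
  simp [Complex.conj_ofReal]

theorem Commute.evolution_right {K H : Matrix n n ℂ} (h : Commute K H) (t : ℝ) :
    Commute K (evolution H t) :=
  (h.smul_right _).exp_right

theorem evolution_conj_of_anticommute {T H : Matrix n n ℂ} (hT2 : T * T = 1)
    (hTH : T * H = -(H * T)) (t : ℝ) :
    T * evolution H t * T = evolution H (-t) := by
  have hTinv : T⁻¹ = T := inv_eq_right_inv hT2
  have hconj :
      T * ((-(Complex.I * (t : ℂ))) • H) * T⁻¹ = (-(Complex.I * ((-t : ℝ) : ℂ))) • H := by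
    rw [hTinv, Matrix.mul_smul, Matrix.smul_mul, hTH, neg_mul, mul_assoc, hT2, mul_one,
      smul_neg, ← neg_smul]
    congr 1
    push_cast
    ring
  rw [evolution, evolution, ← hconj, exp_conj _ _ ⟨⟨T, T, hT2, hT2⟩, rfl⟩, hTinv]

theorem mul_evolution_of_anticommute {T H : Matrix n n ℂ} (hT2 : T * T = 1)
    (hTH : T * H = -(H * T)) (t : ℝ) :
    T * evolution H t = evolution H (-t) * T := by
  rw [← evolution_conj_of_anticommute hT2 hTH, mul_assoc _ T, hT2, mul_one]

theorem IsHermitian.star_dotProduct_mul_evolution {H K : Matrix n n ℂ} (hH : H.IsHermitian)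
    (hK : K.IsHermitian) (hKH : Commute K H) (v : n → ℂ) (s : ℝ) :
    star (star v ⬝ᵥ (K * evolution H s) *ᵥ v) = star v ⬝ᵥ (K * evolution H (-s)) *ᵥ v := by
  rw [star_star_dotProduct_mulVec, conjTranspose_mul, hH.conjTranspose_evolution, hK.eq,
    (hKH.evolution_right _).eq]

theorem IsHermitian.star_evolution_mulVec_dotProduct {H K : Matrix n n ℂ} (hH : H.IsHermitian)
    (hKH : Commute K H) (v : n → ℂ) (a b : ℝ) :
    star (evolution H a *ᵥ v) ⬝ᵥ K *ᵥ (evolution H b *ᵥ v) =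
      star v ⬝ᵥ (K * evolution H (b - a)) *ᵥ v := by
  rw [mulVec_mulVec, star_mulVec_dotProduct_mulVec, hH.conjTranspose_evolution, ← mul_assoc,
    ← (hKH.evolution_right _).eq, mul_assoc, evolution_mul_evolution, neg_add_eq_sub]

theorem IsHermitian.conjTranspose_evolution_mul_mul_evolution {H K T : Matrix n n ℂ}
    (hH : H.IsHermitian) (hKH : Commute K H) (hT2 : T * T = 1) (hTH : T * H = -(H * T))
    (t : ℝ) :
    (evolution H t)ᴴ * (K * T * evolution H t) = K * evolution H (-(2 * t)) * T := by
  rw [hH.conjTranspose_evolution, mul_assoc K, mul_evolution_of_anticommute hT2 hTH,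
    ← mul_assoc, ← mul_assoc, ← (hKH.evolution_right _).eq, mul_assoc K,
    evolution_mul_evolution, ← two_mul, mul_neg]

theorem dotProduct_mul_evolution_eq_neg {H T K : Matrix n n ℂ} (hT : T.IsHermitian)
    (hT2 : T * T = 1) (hTH : T * H = -(H * T)) (hKT : K * T = -(T * K))
    {v : n → ℂ} {c : ℝ} (hc : c ≠ 0) (hv : T *ᵥ v = (c : ℂ) • v) (s : ℝ) :
    star v ⬝ᵥ (K * evolution H s) *ᵥ v = -(star v ⬝ᵥ (K * evolution H (-s)) *ᵥ v) := by
  have hswap : T * (K * evolution H s) = -(K * evolution H (-s) * T) := by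
    rw [← mul_assoc, ← neg_neg (T * K), ← hKT, neg_mul, mul_assoc,
      mul_evolution_of_anticommute hT2 hTH, ← mul_assoc]
  have h := hT.dotProduct_mul_mulVec_of_mulVec_eq hv (K * evolution H s)
  rw [hswap, neg_mulVec, dotProduct_neg, dotProduct_mul_mulVec_of_mulVec_eq hv] at h
  exact mul_left_cancel₀ (Complex.ofReal_ne_zero.mpr hc) (by linear_combination -h)

end Matrix

theorem stmt_2_general (n : ℕ) (H T K : Matrix (Fin n) (Fin n) ℂ)
    (hT : Tᴴ = T) (hT2 : T * T = 1) (hH : Hᴴ = H) (hK : Kᴴ = K)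
    (hantiTH : T * H = -(H * T))
    (hcomm : K * H = H * K) (hantiKT : K * T = -(T * K))
    (v₀ : Fin n → ℂ)
    (c : ℝ) (hc : c = 1 ∨ c = -1)
    (hstab : T.mulVec v₀ = (c : ℂ) • v₀)
    (v : ℝ → Fin n → ℂ)
    (hv : ∀ t : ℝ, v t = (NormedSpace.exp ((-(Complex.I * (t : ℂ))) • H)).mulVec v₀)
    (ta tb : ℝ) :
    star (v ta) ⬝ᵥ K.mulVec (v tb) =
        Complex.I * (c : ℂ) *
          (star (v ((tb - ta) / 2)) ⬝ᵥ (Complex.I • (K * T)).mulVec (v ((tb - ta) / 2))) ∧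
      (star (v ta) ⬝ᵥ K.mulVec (v tb)).re = 0 ∧
      (Complex.I • (K * T))ᴴ = Complex.I • (K * T) := by
  have hc0 : c ≠ 0 := by rcases hc with rfl | rfl <;> norm_num
  have hc2 : (c : ℂ) * c = 1 := by rcases hc with rfl | rfl <;> norm_num
  have hv' : ∀ t, v t = evolution H t *ᵥ v₀ := hv
  set f : ℝ → ℂ := fun s => star v₀ ⬝ᵥ (K * evolution H s) *ᵥ v₀
  have hodd : ∀ s, f s = -f (-s) :=
    dotProduct_mul_evolution_eq_neg hT hT2 hantiTH hantiKT hc0 hstab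
  have hlhs : star (v ta) ⬝ᵥ K *ᵥ v tb = f (tb - ta) := by
    rw [hv', hv', IsHermitian.star_evolution_mulVec_dotProduct hH hcomm]
  have hrhs : star (v ((tb - ta) / 2)) ⬝ᵥ (Complex.I • (K * T)) *ᵥ v ((tb - ta) / 2) =
      Complex.I * (c * f (-(tb - ta))) := by
    rw [hv', mulVec_mulVec, star_mulVec_dotProduct_mulVec, Matrix.smul_mul, Matrix.mul_smul,
      IsHermitian.conjTranspose_evolution_mul_mul_evolution hH hcomm hT2 hantiTH,
      mul_div_cancel₀ _ two_ne_zero, smul_mulVec, dotProduct_smul,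
      dotProduct_mul_mulVec_of_mulVec_eq hstab, smul_eq_mul]
  refine ⟨?_, ?_, IsHermitian.isHermitian_I_smul_mul hK hT hantiKT⟩
  · rw [hlhs, hrhs, hodd]
    linear_combination (-(f (-(tb - ta)))) * (c * c * Complex.I_mul_I - hc2)
  · have hconj : star (f (tb - ta)) = -f (tb - ta) := by
      rw [IsHermitian.star_dotProduct_mul_evolution hH hK hcomm, hodd (tb - ta), neg_neg]
    have hre := congrArg Complex.re hconj
    rw [hlhs]
    simp only [Complex.star_def, Complex.conj_re, Complex.neg_re] at hre
    linarith

/-- With `T` Hermitian involutory, `{T,H}=0`, `T|v₀⟩ = c|v₀⟩` (`c = ±1`), and `K` Hermitian with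
`[K,H]=0`, `{K,T}=0`: for all `tₐ, t_b`, with `h = (t_b - tₐ)/2`,
`⟨v(tₐ)|K|v(t_b)⟩ = i c ⟨v(h)|(iKT)|v(h)⟩`, this quantity is purely imaginary,
and `iKT` is Hermitian. -/
theorem stmt_2 (n : ℕ) (H T K : Matrix (Fin n) (Fin n) ℂ)
    (hT : Tᴴ = T) (hT2 : T * T = 1) (hH : Hᴴ = H) (hK : Kᴴ = K)
    (hantiTH : T * H = -(H * T))
    (hcomm : K * H = H * K) (hantiKT : K * T = -(T * K))
    (v₀ : Fin n → ℂ) (hv₀ : star v₀ ⬝ᵥ v₀ = 1)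
    (c : ℝ) (hc : c = 1 ∨ c = -1)
    (hstab : T.mulVec v₀ = (c : ℂ) • v₀)
    (v : ℝ → Fin n → ℂ)
    (hv : ∀ t : ℝ, v t = (NormedSpace.exp ((-(Complex.I * (t : ℂ))) • H)).mulVec v₀)
    (ta tb : ℝ) :
    star (v ta) ⬝ᵥ K.mulVec (v tb) =
        Complex.I * (c : ℂ) *
          (star (v ((tb - ta) / 2)) ⬝ᵥ (Complex.I • (K * T)).mulVec (v ((tb - ta) / 2))) ∧
      (star (v ta) ⬝ᵥ K.mulVec (v tb)).re = 0 ∧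
      (Complex.I • (K * T))ᴴ = Complex.I • (K * T) :=
  stmt_2_general n H T K hT hT2 hH hK hantiTH hcomm hantiKT v₀ c hc hstab v hv ta tb
end

section
/- Let T be Hermitian involutory with {T,H}=0, P = (T+I)/2, P⊥ = (I-T)/2, U = exp(-itH), √U = exp(-i(t/2)H). Then PUP = P(√U)†T(√U)P and P⊥UP⊥ = -P⊥(√U)†T(√U)P⊥. -/
open Matrix NormedSpace

/-!
Conjugation by the involution `T` maps `H` to `-H`, so `T * exp (c • H) = exp (-c • H) * T`. For
`√U = exp (c • H)` with `c` purely imaginary and `H` Hermitian, `√Uᴴ = exp (-c • H)`, hence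
`√Uᴴ * T * √U = T * √U * √U = T * U`. Finally `P` and `P⊥` are the eigenprojections of `T`:
`P * T = P` and `P⊥ * T = -P⊥`, which absorbs the extra factor `T`.
-/

namespace Matrix

variable {m : Type*} [Fintype m] [DecidableEq m]

theorem mul_exp_eq_exp_neg_mul_of_anticommute {𝔸 : Type*} [NormedRing 𝔸] [NormedAlgebra ℚ 𝔸]
    [CompleteSpace 𝔸] {T A : Matrix m m 𝔸} (hT : T * T = 1) (hTA : T * A = -(A * T)) :
    T * exp A = exp (-A) * T := by
  have hconj : T * A * T = -A := by rw [hTA, neg_mul, mul_assoc, hT, mul_one]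
  have h := exp_units_conj ⟨T, T, hT, hT⟩ A
  simp only [Units.inv_mk, Units.val_mk, hconj] at h
  rw [h, mul_assoc, hT, mul_one]

variable {𝕜 : Type*} [RCLike 𝕜]

theorem exp_smul_mul_exp_smul (a b : 𝕜) (A : Matrix m m 𝕜) :
    exp (a • A) * exp (b • A) = exp ((a + b) • A) := by
  rw [add_smul, exp_add_of_commute _ _ (((Commute.refl A).smul_left a).smul_right b)]

theorem conjTranspose_exp_smul_of_isHermitian {A : Matrix m m 𝕜} (hA : A.IsHermitian) (c : 𝕜) :
    (exp (c • A))ᴴ = exp (star c • A) := by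
  rw [← exp_conjTranspose, conjTranspose_smul, hA.eq]

end Matrix

section Involution

variable {R A : Type*} [CommSemiring R] [Ring A] [Algebra R A] {T : A}

theorem smul_add_one_mul_of_mul_self_eq_one (hT : T * T = 1) (c : R) :
    c • (T + 1) * T = c • (T + 1) := by
  rw [smul_mul_assoc, add_mul, hT, one_mul, add_comm]

theorem smul_one_sub_mul_of_mul_self_eq_one (hT : T * T = 1) (c : R) :
    c • (1 - T) * T = -(c • (1 - T)) := by
  rw [smul_mul_assoc, sub_mul, hT, one_mul, ← smul_neg, neg_sub]

end Involution

theorem stmt_8_general (n : ℕ) (H T : Matrix (Fin n) (Fin n) ℂ)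
    (hT2 : T * T = 1) (hH : Hᴴ = H)
    (hanti : T * H = -(H * T))
    (P Pperp : Matrix (Fin n) (Fin n) ℂ)
    (hP : P = (2⁻¹ : ℂ) • (T + 1)) (hPperp : Pperp = (2⁻¹ : ℂ) • (1 - T))
    (t : ℝ) (U sqrtU : Matrix (Fin n) (Fin n) ℂ)
    (hU : U = NormedSpace.exp ((-(Complex.I * (t : ℂ))) • H))
    (hsqrtU : sqrtU = NormedSpace.exp ((-(Complex.I * ((t / 2 : ℝ) : ℂ))) • H)) :
    P * U * P = P * sqrtUᴴ * T * sqrtU * P ∧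
      Pperp * U * Pperp = -(Pperp * sqrtUᴴ * T * sqrtU * Pperp) := by
  have hsq : sqrtU * sqrtU = U := by
    rw [hsqrtU, hU, exp_smul_mul_exp_smul]
    congr 2
    push_cast
    ring
  generalize hc : -(Complex.I * ((t / 2 : ℝ) : ℂ)) = c at hsqrtU
  have hstar : star c = -c := by simp [← hc]
  have hswap : T * sqrtU = sqrtUᴴ * T := by
    have hanti_smul : T * (c • H) = -(c • H * T) := by
      rw [mul_smul_comm, hanti, smul_mul_assoc, smul_neg]
    rw [hsqrtU, conjTranspose_exp_smul_of_isHermitian hH, hstar, neg_smul]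
    exact mul_exp_eq_exp_neg_mul_of_anticommute hT2 hanti_smul
  have hmid (Q : Matrix (Fin n) (Fin n) ℂ) : Q * sqrtUᴴ * T * sqrtU * Q = Q * T * U * Q := by
    rw [← hsq, mul_assoc Q sqrtUᴴ, ← hswap]
    simp only [mul_assoc]
  refine ⟨?_, ?_⟩
  · rw [hmid, hP, smul_add_one_mul_of_mul_self_eq_one hT2]
  · rw [hmid, hPperp, smul_one_sub_mul_of_mul_self_eq_one hT2, neg_mul, neg_mul, neg_neg]

/-- With `T` Hermitian involutory, `{T,H}=0`, `P = (T+I)/2`, `P⊥ = (I-T)/2`, `U = exp(-itH)`,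
`√U = exp(-i(t/2)H)`: `PUP = P(√U)†T(√U)P` and `P⊥UP⊥ = -P⊥(√U)†T(√U)P⊥`. -/
theorem stmt_8 (n : ℕ) (H T : Matrix (Fin n) (Fin n) ℂ)
    (hT : Tᴴ = T) (hT2 : T * T = 1) (hH : Hᴴ = H)
    (hanti : T * H = -(H * T))
    (P Pperp : Matrix (Fin n) (Fin n) ℂ)
    (hP : P = (2⁻¹ : ℂ) • (T + 1)) (hPperp : Pperp = (2⁻¹ : ℂ) • (1 - T))
    (t : ℝ) (U sqrtU : Matrix (Fin n) (Fin n) ℂ)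
    (hU : U = NormedSpace.exp ((-(Complex.I * (t : ℂ))) • H))
    (hsqrtU : sqrtU = NormedSpace.exp ((-(Complex.I * ((t / 2 : ℝ) : ℂ))) • H)) :
    P * U * P = P * sqrtUᴴ * T * sqrtU * P ∧
      Pperp * U * Pperp = -(Pperp * sqrtUᴴ * T * sqrtU * Pperp) :=
  stmt_8_general n H T hT2 hH hanti P Pperp hP hPperp t U sqrtU hU hsqrtU
end
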